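/- Let $q = p^r$, $r \geq 1$, and let $T$ be the subgroup of the Nottingham group over $\mathbb{F}_p$ consisting of series $t + \sum_{i\geq1} a_i t^{1+qi}$, with filtration $T_l = \{f \in T : f \equiv t \bmod t^{1+ql}\}$. Then for every $l \geq q+2$ with $l$ relatively prime to $p$, one has $T_l \subseteq T_{l+1}\,[T,T]$, where $[T,T]$ denotes the (closure of the) commutator subgroup of $T$. -/

import Mathlib

open PowerSeries

/-- Composition of power series `f ∘ g` (intended for `g` with zero constant term). -/
noncomputable def pcomp {k : Type} [CommRing k] (f g : PowerSeries k) : PowerSeries k :=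
  PowerSeries.mk fun n =>
    PowerSeries.coeff (R := k) n (Polynomial.eval₂ (PowerSeries.C (R := k)) g (PowerSeries.trunc (n + 1) f))

/-- `n`-fold compositional iterate of `f`. -/
noncomputable def pcompIter {k : Type} [CommRing k] (f : PowerSeries k) : ℕ → PowerSeries k
  | 0 => PowerSeries.X
  | n + 1 => pcomp f (pcompIter f n)

/-- Membership in the Nottingham group: `f = t + a₂ t² + ⋯`. -/
def IsNott {k : Type} [CommRing k] (f : PowerSeries k) : Prop :=
  PowerSeries.coeff (R := k) 0 f = 0 ∧ PowerSeries.coeff (R := k) 1 f = 1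

/-- Membership in `T = S_q`: series of the form `t + ∑_{i≥1} a_i t^{1+qi}`. -/
def InT {k : Type} [CommRing k] (q : ℕ) (f : PowerSeries k) : Prop :=
  PowerSeries.coeff (R := k) 0 f = 0 ∧ PowerSeries.coeff (R := k) 1 f = 1 ∧
    ∀ m, 2 ≤ m → ¬ q ∣ (m - 1) → PowerSeries.coeff (R := k) m f = 0

/-- Membership in `T_i = {f ∈ T : f(t) ≡ t mod t^{1+qi}}`. -/
def InTi {k : Type} [CommRing k] (q : ℕ) (f : PowerSeries k) (i : ℕ) : Prop :=
  InT q f ∧ ∀ m, 2 ≤ m → m < 1 + q * i → PowerSeries.coeff (R := k) m f = 0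

section AuxComp

open Finset

variable {k : Type} [CommRing k]

theorem coeff_pcomp (f g : PowerSeries k) (n : ℕ) :
    coeff (R := k) n (pcomp f g) = ∑ m ∈ range (n+1), coeff (R := k) m f * coeff (R := k) n (g ^ m) := by
  have h : pcomp f g = PowerSeries.mk fun n =>
      coeff (R := k) n (Polynomial.eval₂ (C (R := k)) g (trunc (n + 1) f)) := rfl
  rw [h, coeff_mk, Polynomial.eval₂_eq_sum_range' _ (natDegree_trunc_lt f n) g, map_sum]
  refine Finset.sum_congr rfl fun m hm => ?_
  rw [coeff_C_mul, PowerSeries.coeff_trunc, if_pos (mem_range.mp hm)]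

theorem coeff_pow_lt {g : PowerSeries k} (hg : coeff (R := k) 0 g = 0) {n m : ℕ} (h : n < m) :
    coeff (R := k) n (g ^ m) = 0 := by
  have hX : (X : PowerSeries k) ∣ g := X_dvd_iff.mpr (by rwa [← coeff_zero_eq_constantCoeff_apply])
  exact X_pow_dvd_iff.mp (pow_dvd_pow_of_dvd hX m) n h

theorem coeff_pow_self {g : PowerSeries k} (hg : coeff (R := k) 0 g = 0) (n : ℕ) :
    coeff (R := k) n (g ^ n) = (coeff (R := k) 1 g) ^ n := by
  induction n with
  | zero => simp
  | succ n ih =>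
    rw [pow_succ', coeff_mul, Finset.sum_eq_single (1, n)]
    · rw [ih]; ring
    · rintro ⟨u, v⟩ hmem hne
      rw [Finset.HasAntidiagonal.mem_antidiagonal] at hmem
      rcases Nat.eq_zero_or_pos u with hu | hu
      · subst hu; simp only at *; rw [hg, zero_mul]
      · rcases Nat.lt_or_ge v n with hv | hv
        · exact mul_eq_zero_of_right _ (coeff_pow_lt hg hv)
        · exfalso; apply hne
          have h1 : u = 1 ∧ v = n := by omega
          rw [h1.1, h1.2]
    · intro h; exact absurd (Finset.HasAntidiagonal.mem_antidiagonal.mpr (by omega)) h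

theorem coeff_pow_congr {a b : PowerSeries k} (ha : coeff (R := k) 0 a = 0) (hb : coeff (R := k) 0 b = 0)
    {n : ℕ} (hab : ∀ j < n, coeff (R := k) j a = coeff (R := k) j b) {m : ℕ} (hm : 2 ≤ m) :
    coeff (R := k) n (a ^ m) = coeff (R := k) n (b ^ m) := by
  have key : coeff (R := k) n (a ^ m) - coeff (R := k) n (b ^ m) = 0 := by
    rw [← map_sub, ← geom_sum₂_mul a b m, coeff_mul]
    refine Finset.sum_eq_zero ?_
    rintro ⟨u, v⟩ hmem
    rw [Finset.HasAntidiagonal.mem_antidiagonal] at hmem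
    rcases Nat.lt_or_ge v n with hv | hv
    · exact mul_eq_zero_of_right _ (by rw [map_sub, hab v hv, sub_self])
    · have hu : u = 0 := by omega
      subst hu
      refine mul_eq_zero_of_left ?_ _
      rw [map_sum]
      refine Finset.sum_eq_zero fun i _ => ?_
      have h0 : coeff (R := k) 0 (a ^ i * b ^ (m - 1 - i)) =
          (coeff (R := k) 0 a) ^ i * (coeff (R := k) 0 b) ^ (m - 1 - i) := by
        simp [coeff_zero_eq_constantCoeff_apply, map_mul, map_pow]
      rw [h0, ha, hb]
      rcases Nat.eq_zero_or_pos i with h1 | h1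
      · subst h1; rw [pow_zero, one_mul, zero_pow (by omega : m - 1 - 0 ≠ 0)]
      · rw [zero_pow (by omega : i ≠ 0), zero_mul]
  exact sub_eq_zero.mp key

theorem pcomp_add (f₁ f₂ g : PowerSeries k) :
    pcomp (f₁ + f₂) g = pcomp f₁ g + pcomp f₂ g := by
  ext n
  simp only [coeff_pcomp, map_add, add_mul, Finset.sum_add_distrib]

theorem pcomp_sub (f₁ f₂ g : PowerSeries k) :
    pcomp (f₁ - f₂) g = pcomp f₁ g - pcomp f₂ g := by
  ext n
  simp only [coeff_pcomp, map_sub, sub_mul, Finset.sum_sub_distrib]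

theorem pcomp_C_mul (c : k) (f g : PowerSeries k) :
    pcomp (C (R := k) c * f) g = C (R := k) c * pcomp f g := by
  ext n
  rw [coeff_pcomp, coeff_C_mul, coeff_pcomp, Finset.mul_sum]
  exact Finset.sum_congr rfl fun m _ => by rw [coeff_C_mul]; ring

theorem pcomp_X {g : PowerSeries k} (hg : coeff (R := k) 0 g = 0) : pcomp X g = g := by
  ext n
  rw [coeff_pcomp]
  rcases Nat.eq_zero_or_pos n with h0 | h0
  · subst h0; simp [hg]
  · rw [Finset.sum_eq_single 1]
    · rw [coeff_X, if_pos rfl, pow_one, one_mul]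
    · intro m _ hm; rw [coeff_X, if_neg hm, zero_mul]
    · intro h; exact absurd (mem_range.mpr (by omega)) h

theorem pcomp_X_right (f : PowerSeries k) : pcomp f X = f := by
  ext n
  rw [coeff_pcomp, Finset.sum_eq_single n]
  · rw [coeff_X_pow, if_pos rfl, mul_one]
  · intro m _ hm; rw [coeff_X_pow, if_neg (fun h => hm h.symm), mul_zero]
  · intro h; exact absurd (mem_range.mpr (by omega)) h

theorem pcomp_one (g : PowerSeries k) : pcomp 1 g = 1 := by
  ext n
  rw [coeff_pcomp, Finset.sum_eq_single 0]
  · simp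
  · intro m _ hm; rw [coeff_one, if_neg hm, zero_mul]
  · intro h; exact absurd (mem_range.mpr (by omega)) h

theorem pcomp_X_pow {g : PowerSeries k} (hg : coeff (R := k) 0 g = 0) {s : ℕ} (hs : 1 ≤ s) :
    pcomp (X ^ s) g = g ^ s := by
  ext n
  rw [coeff_pcomp]
  by_cases hsn : s ≤ n
  · rw [Finset.sum_eq_single s]
    · rw [coeff_X_pow, if_pos rfl, one_mul]
    · intro m _ hm; rw [coeff_X_pow, if_neg hm, zero_mul]
    · intro h; exact absurd (mem_range.mpr (by omega)) h
  · rw [coeff_pow_lt hg (by omega : n < s)]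
    refine Finset.sum_eq_zero fun m hmem => ?_
    rw [coeff_X_pow, if_neg (by rw [mem_range] at hmem; omega), zero_mul]

theorem sum_antidiag_square {M : Type} [AddCommMonoid M] (n : ℕ) (t : ℕ → ℕ → M)
    (ht : ∀ u v, n < u + v → t u v = 0) :
    ∑ m ∈ range (n+1), ∑ p ∈ Finset.HasAntidiagonal.antidiagonal m, t p.1 p.2
      = ∑ u ∈ range (n+1), ∑ v ∈ range (n+1), t u v := by
  rw [← Finset.sum_product']
  have hdisj : (↑(range (n+1)) : Set ℕ).PairwiseDisjoint Finset.HasAntidiagonal.antidiagonal := by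
    intro m₁ _ m₂ _ hne
    refine Finset.disjoint_left.mpr fun p hp1 hp2 => hne ?_
    rw [← Finset.HasAntidiagonal.mem_antidiagonal.mp hp1, ← Finset.HasAntidiagonal.mem_antidiagonal.mp hp2]
  rw [← Finset.sum_biUnion hdisj]
  apply Finset.sum_subset
  · intro p hp
    simp only [Finset.mem_biUnion, mem_range, Finset.HasAntidiagonal.mem_antidiagonal] at hp
    obtain ⟨m, hm, hpm⟩ := hp
    simp only [Finset.mem_product, mem_range]
    omega
  · intro p hp hnp
    apply ht
    by_contra h
    push_neg at h
    exact hnp (Finset.mem_biUnion.mpr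
      ⟨p.1 + p.2, mem_range.mpr (by omega), Finset.HasAntidiagonal.mem_antidiagonal.mpr rfl⟩)

theorem pcomp_mul {g : PowerSeries k} (hg : coeff (R := k) 0 g = 0) (f₁ f₂ : PowerSeries k) :
    pcomp (f₁ * f₂) g = pcomp f₁ g * pcomp f₂ g := by
  ext n
  have key := sum_antidiag_square n
      (fun u v => coeff (R := k) u f₁ * coeff (R := k) v f₂ * coeff (R := k) n (g ^ (u+v)))
      (fun u v h => by
        show coeff (R := k) u f₁ * coeff (R := k) v f₂ * coeff (R := k) n (g ^ (u+v)) = 0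
        rw [coeff_pow_lt hg h, mul_zero])
  rw [coeff_pcomp, coeff_mul]
  have e1 : ∀ m ∈ range (n+1), coeff (R := k) m (f₁ * f₂) * coeff (R := k) n (g ^ m)
      = ∑ p ∈ Finset.HasAntidiagonal.antidiagonal m, coeff (R := k) p.1 f₁ * coeff (R := k) p.2 f₂ * coeff (R := k) n (g ^ (p.1 + p.2)) := by
    intro m _
    rw [coeff_mul, Finset.sum_mul]
    refine Finset.sum_congr rfl fun p hp => ?_
    rw [Finset.HasAntidiagonal.mem_antidiagonal.mp hp]
  rw [Finset.sum_congr rfl e1, key]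
  have e2 : ∀ p ∈ Finset.HasAntidiagonal.antidiagonal n,
      coeff (R := k) p.1 (pcomp f₁ g) * coeff (R := k) p.2 (pcomp f₂ g)
        = ∑ u ∈ range (n+1), ∑ v ∈ range (n+1),
            (coeff (R := k) u f₁ * coeff (R := k) p.1 (g ^ u)) * (coeff (R := k) v f₂ * coeff (R := k) p.2 (g ^ v)) := by
    intro p hp
    have hp' := Finset.HasAntidiagonal.mem_antidiagonal.mp hp
    rw [coeff_pcomp, coeff_pcomp]
    have s1 : ∑ u ∈ range (p.1+1), coeff (R := k) u f₁ * coeff (R := k) p.1 (g ^ u)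
        = ∑ u ∈ range (n+1), coeff (R := k) u f₁ * coeff (R := k) p.1 (g ^ u) :=
      Finset.sum_subset (Finset.range_subset_range.mpr (by omega))
        (fun x _ hx => by
          rw [coeff_pow_lt hg (by rw [mem_range] at hx; omega), mul_zero])
    have s2 : ∑ v ∈ range (p.2+1), coeff (R := k) v f₂ * coeff (R := k) p.2 (g ^ v)
        = ∑ v ∈ range (n+1), coeff (R := k) v f₂ * coeff (R := k) p.2 (g ^ v) :=
      Finset.sum_subset (Finset.range_subset_range.mpr (by omega))
        (fun x _ hx => by
          rw [coeff_pow_lt hg (by rw [mem_range] at hx; omega), mul_zero])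
    rw [s1, s2, Finset.sum_mul_sum]
  rw [Finset.sum_congr rfl e2]
  conv_rhs => rw [Finset.sum_comm]
  refine Finset.sum_congr rfl fun u _ => ?_
  conv_rhs => rw [Finset.sum_comm]
  refine Finset.sum_congr rfl fun v _ => ?_
  have e3 : ∑ p ∈ Finset.HasAntidiagonal.antidiagonal n,
      (coeff (R := k) u f₁ * coeff (R := k) p.1 (g ^ u)) * (coeff (R := k) v f₂ * coeff (R := k) p.2 (g ^ v))
        = (coeff (R := k) u f₁ * coeff (R := k) v f₂) * coeff (R := k) n (g ^ u * g ^ v) := by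
    rw [coeff_mul, Finset.mul_sum]
    exact Finset.sum_congr rfl fun p _ => by ring
  rw [e3, ← pow_add]

theorem pcomp_pow {g : PowerSeries k} (hg : coeff (R := k) 0 g = 0) (f : PowerSeries k) (s : ℕ) :
    pcomp (f ^ s) g = (pcomp f g) ^ s := by
  induction s with
  | zero => rw [pow_zero, pow_zero, pcomp_one]
  | succ s ih => rw [pow_succ, pow_succ, pcomp_mul hg, ih]

theorem coeff_zero_pcomp (f g : PowerSeries k) : coeff (R := k) 0 (pcomp f g) = coeff (R := k) 0 f := by
  rw [coeff_pcomp]; simp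

theorem coeff_one_pcomp (f g : PowerSeries k) :
    coeff (R := k) 1 (pcomp f g) = coeff (R := k) 1 f * coeff (R := k) 1 g := by
  rw [coeff_pcomp, Finset.sum_range_succ, Finset.sum_range_one]
  simp [coeff_one]

theorem pcomp_assoc {f g h : PowerSeries k} (hg : coeff (R := k) 0 g = 0) (hh : coeff (R := k) 0 h = 0) :
    pcomp (pcomp f g) h = pcomp f (pcomp g h) := by
  ext n
  rw [coeff_pcomp, coeff_pcomp]
  have e1 : ∀ m ∈ range (n+1), coeff (R := k) m (pcomp f g) * coeff (R := k) n (h ^ m)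
      = ∑ s ∈ range (n+1), coeff (R := k) s f * (coeff (R := k) m (g ^ s) * coeff (R := k) n (h ^ m)) := by
    intro m hm
    rw [coeff_pcomp]
    have s1 : ∑ s ∈ range (m+1), coeff (R := k) s f * coeff (R := k) m (g ^ s)
        = ∑ s ∈ range (n+1), coeff (R := k) s f * coeff (R := k) m (g ^ s) :=
      Finset.sum_subset (Finset.range_subset_range.mpr (by rw [mem_range] at hm; omega))
        (fun x _ hx => by
          rw [coeff_pow_lt hg (by rw [mem_range] at hx; omega), mul_zero])
    rw [s1, Finset.sum_mul]
    exact Finset.sum_congr rfl fun s _ => by ring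
  rw [Finset.sum_congr rfl e1, Finset.sum_comm]
  refine Finset.sum_congr rfl fun s _ => ?_
  rw [← Finset.mul_sum]
  congr 1
  rw [← coeff_pcomp, pcomp_pow hh]

theorem coeff_pcomp_split (g h : PowerSeries k) (hg0 : coeff (R := k) 0 g = 0) (n : ℕ) :
    coeff (R := k) (n+2) (pcomp g h) = coeff (R := k) 1 g * coeff (R := k) (n+2) h
      + ∑ m ∈ Finset.Icc 2 (n+2), coeff (R := k) m g * coeff (R := k) (n+2) (h ^ m) := by
  rw [coeff_pcomp]
  have hsplit : range (n+2+1) = insert 0 (insert 1 (Finset.Icc 2 (n+2))) := by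
    ext x; simp only [mem_range, Finset.mem_insert, Finset.mem_Icc]; omega
  rw [hsplit, Finset.sum_insert (by simp), Finset.sum_insert (by simp [Finset.mem_Icc])]
  rw [hg0, zero_mul, zero_add, pow_one]

end AuxComp

section AuxInv

open Finset

variable {k : Type} [CommRing k]

/-- Coefficients of the compositional inverse, by strong recursion. -/
noncomputable def invC (g : PowerSeries k) : ℕ → k
  | 0 => 0
  | 1 => 1
  | n+2 => - ∑ m ∈ Finset.Icc 2 (n+2), coeff (R := k) m g *
      coeff (R := k) (n+2) ((PowerSeries.mk (fun j => if h : j < n+2 then invC g j else 0)) ^ m)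
  termination_by n => n
  decreasing_by exact h

/-- The compositional inverse series. -/
noncomputable def invS (g : PowerSeries k) : PowerSeries k := PowerSeries.mk (invC g)

theorem invS_zero (g : PowerSeries k) : coeff (R := k) 0 (invS g) = 0 := by
  rw [invS, coeff_mk, invC]

theorem invS_one (g : PowerSeries k) : coeff (R := k) 1 (invS g) = 1 := by
  rw [invS, coeff_mk, invC]

theorem invS_spec {g : PowerSeries k} (hg0 : coeff (R := k) 0 g = 0) (hg1 : coeff (R := k) 1 g = 1) :
    pcomp g (invS g) = X := by
  ext n
  match n with
  | 0 => rw [coeff_zero_pcomp, hg0, coeff_X]; simp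
  | 1 => rw [coeff_one_pcomp, hg1, invS_one, coeff_X]; simp
  | n+2 =>
    rw [coeff_pcomp_split g _ hg0, hg1, one_mul]
    have hmk0 : coeff (R := k) 0 (PowerSeries.mk (fun j => if h : j < n+2 then invC g j else 0)) = 0 := by
      rw [coeff_mk, dif_pos (by omega : 0 < n+2), invC]
    have hagree : ∀ j < n+2,
        coeff (R := k) j (invS g) = coeff (R := k) j (PowerSeries.mk (fun j => if h : j < n+2 then invC g j else 0)) := by
      intro j hj
      rw [invS, coeff_mk, coeff_mk, dif_pos hj]
    have hsum : ∀ m ∈ Finset.Icc 2 (n+2), coeff (R := k) m g * coeff (R := k) (n+2) (invS g ^ m)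
        = coeff (R := k) m g * coeff (R := k) (n+2)
            ((PowerSeries.mk (fun j => if h : j < n+2 then invC g j else 0)) ^ m) := by
      intro m hm
      congr 1
      exact coeff_pow_congr (invS_zero g) hmk0 hagree (Finset.mem_Icc.mp hm).1
    rw [Finset.sum_congr rfl hsum]
    have hcoeff : coeff (R := k) (n+2) (invS g) = invC g (n+2) := by rw [invS, coeff_mk]
    rw [hcoeff, invC, coeff_X, if_neg (by omega)]
    ring

theorem exists_pinv {g : PowerSeries k} (hg0 : coeff (R := k) 0 g = 0) (hg1 : coeff (R := k) 1 g = 1) :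
    ∃ h : PowerSeries k, coeff (R := k) 0 h = 0 ∧ coeff (R := k) 1 h = 1 ∧
      pcomp g h = X ∧ pcomp h g = X := by
  refine ⟨invS g, invS_zero g, invS_one g, invS_spec hg0 hg1, ?_⟩
  have h2 : pcomp (invS g) (invS (invS g)) = X := invS_spec (invS_zero g) (invS_one g)
  have hg' : g = invS (invS g) := by
    calc g = pcomp g X := (pcomp_X_right g).symm
    _ = pcomp g (pcomp (invS g) (invS (invS g))) := by rw [h2]
    _ = pcomp (pcomp g (invS g)) (invS (invS g)) :=
        (pcomp_assoc (invS_zero g) (invS_zero (invS g))).symm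
    _ = pcomp X (invS (invS g)) := by rw [invS_spec hg0 hg1]
    _ = invS (invS g) := pcomp_X (invS_zero (invS g))
  calc pcomp (invS g) g = pcomp (invS g) (invS (invS g)) := by rw [← hg']
  _ = X := h2

end AuxInv

section AuxSupp

open Finset

variable {k : Type} [CommRing k]

theorem suppMod_mul {q s t : ℕ} {f g : PowerSeries k}
    (hf : ∀ m, m % q ≠ s % q → coeff (R := k) m f = 0)
    (hg : ∀ m, m % q ≠ t % q → coeff (R := k) m g = 0) :
    ∀ m, m % q ≠ (s+t) % q → coeff (R := k) m (f * g) = 0 := by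
  intro n hn
  rw [coeff_mul]
  refine Finset.sum_eq_zero fun p hp => ?_
  have hp' := Finset.HasAntidiagonal.mem_antidiagonal.mp hp
  by_cases h1 : p.1 % q = s % q
  · refine mul_eq_zero_of_right _ (hg _ fun h2 => hn ?_)
    rw [← hp', Nat.add_mod, h1, h2, ← Nat.add_mod]
  · exact mul_eq_zero_of_left (hf _ h1) _

theorem suppMod_pow {q : ℕ} {g : PowerSeries k}
    (hg : ∀ m, m % q ≠ 1 % q → coeff (R := k) m g = 0) (s : ℕ) :
    ∀ m, m % q ≠ s % q → coeff (R := k) m (g ^ s) = 0 := by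
  induction s with
  | zero =>
    intro m hm
    rw [pow_zero, coeff_one, if_neg (fun h => hm (by rw [h]))]
  | succ s ih =>
    intro m hm
    rw [pow_succ]
    exact suppMod_mul ih hg m hm

theorem suppOne_pcomp {q : ℕ} {a b : PowerSeries k}
    (ha : ∀ m, m % q ≠ 1 % q → coeff (R := k) m a = 0)
    (hb : ∀ m, m % q ≠ 1 % q → coeff (R := k) m b = 0) :
    ∀ m, m % q ≠ 1 % q → coeff (R := k) m (pcomp a b) = 0 := by
  intro n hn
  rw [coeff_pcomp]
  refine Finset.sum_eq_zero fun m _ => ?_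
  by_cases h1 : m % q = 1 % q
  · exact mul_eq_zero_of_right _ (suppMod_pow hb m n fun h => hn (by rw [h, h1]))
  · exact mul_eq_zero_of_left (ha m h1) _

theorem suppOne_inv {q : ℕ} (hq2 : 2 ≤ q) {g h : PowerSeries k}
    (hg : ∀ m, m % q ≠ 1 % q → coeff (R := k) m g = 0)
    (hg0 : coeff (R := k) 0 g = 0) (hg1 : coeff (R := k) 1 g = 1)
    (hh0 : coeff (R := k) 0 h = 0) (hcomp : pcomp g h = X) :
    ∀ m, m % q ≠ 1 % q → coeff (R := k) m h = 0 := by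
  intro n
  induction n using Nat.strong_induction_on with
  | _ n ih =>
    intro hmod
    match n, hmod with
    | 0, _ => exact hh0
    | 1, hmod => exact absurd rfl hmod
    | (n+2), hmod =>
      have hX : coeff (R := k) (n+2) (pcomp g h) = 0 := by
        rw [hcomp, coeff_X, if_neg (by omega)]
      rw [coeff_pcomp_split g h hg0, hg1, one_mul] at hX
      have hh'supp : ∀ m, m % q ≠ 1 % q →
          coeff (R := k) m (PowerSeries.mk (fun j => if j % q = 1 % q then coeff (R := k) j h else 0)) = 0 := by
        intro m hm; rw [coeff_mk, if_neg hm]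
      have hh'0 : coeff (R := k) 0 (PowerSeries.mk (fun j => if j % q = 1 % q then coeff (R := k) j h else 0)) = 0 := by
        rw [coeff_mk]
        split
        · exact hh0
        · rfl
      have hagree : ∀ j < n+2, coeff (R := k) j h =
          coeff (R := k) j (PowerSeries.mk (fun j => if j % q = 1 % q then coeff (R := k) j h else 0)) := by
        intro j hjlt
        rw [coeff_mk]
        by_cases hjm : j % q = 1 % q
        · rw [if_pos hjm]
        · rw [if_neg hjm, ih j hjlt hjm]
      have hsum : ∑ m ∈ Finset.Icc 2 (n+2), coeff (R := k) m g * coeff (R := k) (n+2) (h ^ m) = 0 := by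
        refine Finset.sum_eq_zero fun m hm => ?_
        by_cases h1 : m % q = 1 % q
        · refine mul_eq_zero_of_right _ ?_
          rw [coeff_pow_congr hh0 hh'0 hagree (Finset.mem_Icc.mp hm).1]
          exact suppMod_pow hh'supp m (n+2) (fun hc => hmod (by rw [hc, h1]))
        · exact mul_eq_zero_of_left (hg m h1) _
      rw [hsum, add_zero] at hX
      exact hX

theorem coeff_pcomp_self {E Q : PowerSeries k} (hQ0 : coeff (R := k) 0 Q = 0) (hQ1 : coeff (R := k) 1 Q = 1)
    {n : ℕ} (hE : ∀ j < n, coeff (R := k) j E = 0) : coeff (R := k) n (pcomp E Q) = coeff (R := k) n E := by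
  rw [coeff_pcomp, Finset.sum_eq_single n]
  · rw [coeff_pow_self hQ0, hQ1, one_pow, mul_one]
  · intro m hmem hm
    rw [hE m (by rw [mem_range] at hmem; omega), zero_mul]
  · intro h; exact absurd (mem_range.mpr (by omega)) h

theorem coeff_cancel {W rr f : PowerSeries k} (hW0 : coeff (R := k) 0 W = 0) (hW1 : coeff (R := k) 1 W = 1)
    (hr0 : coeff (R := k) 0 rr = 0) (heq : f = pcomp W rr) (hf1 : coeff (R := k) 1 f = 1) (M : ℕ)
    (hfW : ∀ j, 2 ≤ j → j ≤ M → coeff (R := k) j f = coeff (R := k) j W) :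
    ∀ n ≤ M, coeff (R := k) n rr = coeff (R := k) n (X : PowerSeries k) := by
  intro n
  induction n using Nat.strong_induction_on with
  | _ n ih =>
    intro hn
    match n, hn with
    | 0, _ => rw [hr0, coeff_X, if_neg (by omega)]
    | 1, _ =>
      have h1 : coeff (R := k) 1 f = coeff (R := k) 1 W * coeff (R := k) 1 rr := by rw [heq, coeff_one_pcomp]
      rw [hW1, one_mul] at h1
      rw [coeff_X, if_pos rfl, ← h1, hf1]
    | (n+2), hn =>
      have hX0 : coeff (R := k) 0 (X : PowerSeries k) = 0 := by rw [coeff_X]; simp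
      have hagree : ∀ j < n+2, coeff (R := k) j rr = coeff (R := k) j (X : PowerSeries k) :=
        fun j hj => ih j hj (by omega)
      have hsp : coeff (R := k) (n+2) f = coeff (R := k) (n+2) rr
          + ∑ m ∈ Finset.Icc 2 (n+2), coeff (R := k) m W * coeff (R := k) (n+2) (rr ^ m) := by
        rw [heq, coeff_pcomp_split W rr hW0, hW1, one_mul]
      have hsum : ∑ m ∈ Finset.Icc 2 (n+2), coeff (R := k) m W * coeff (R := k) (n+2) (rr ^ m)
          = coeff (R := k) (n+2) W := by
        have e : ∀ m ∈ Finset.Icc 2 (n+2), coeff (R := k) m W * coeff (R := k) (n+2) (rr ^ m)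
            = coeff (R := k) m W * (if n+2 = m then 1 else 0) := by
          intro m hm
          rw [coeff_pow_congr hr0 hX0 hagree (Finset.mem_Icc.mp hm).1, coeff_X_pow]
        rw [Finset.sum_congr rfl e, Finset.sum_eq_single (n+2)]
        · rw [if_pos rfl, mul_one]
        · intro m _ hm; rw [if_neg (fun h => hm h.symm), mul_zero]
        · intro h; exact absurd (Finset.mem_Icc.mpr (by omega)) h
      rw [hsum] at hsp
      have : coeff (R := k) (n+2) rr = coeff (R := k) (n+2) f - coeff (R := k) (n+2) W := by rw [hsp]; ring
      rw [this, hfW (n+2) (by omega) hn, sub_self, coeff_X, if_neg (by omega)]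

theorem one_add_pow (u : PowerSeries k) (i : ℕ) :
    ∃ S : PowerSeries k, (1+u)^i = 1 + (i : PowerSeries k) * u + u^2 * S := by
  induction i with
  | zero => exact ⟨0, by simp⟩
  | succ i ih =>
    obtain ⟨S, hS⟩ := ih
    refine ⟨S + (i : PowerSeries k) + u * S, ?_⟩
    rw [pow_succ, hS]
    push_cast
    ring

theorem mod_eq_one_iff {q m : ℕ} (hq : 2 ≤ q) (hm : 1 ≤ m) : m % q = 1 % q ↔ q ∣ (m - 1) := by
  have h1 : 1 % q = 1 := Nat.one_mod_eq_one.mpr (by omega)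
  rw [h1]
  constructor
  · intro h
    have h2 := Nat.div_add_mod m q
    rw [h] at h2
    exact ⟨m / q, Nat.sub_eq_of_eq_add h2.symm⟩
  · rintro ⟨t, ht⟩
    rw [Nat.sub_eq_iff_eq_add (by omega)] at ht
    rw [ht, Nat.mul_add_mod, h1]

end AuxSupp

theorem stmt19 (p : ℕ) [Fact p.Prime] (r : ℕ) (hr : 1 ≤ r) (q : ℕ) (hq : q = p ^ r)
    (l : ℕ) (hl : q + 2 ≤ l) (hlp : ¬ p ∣ l)
    (f : PowerSeries (ZMod p)) (hf : InTi q f l) :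
    ∃ a b ainv binv rres : PowerSeries (ZMod p),
      InT q a ∧ InT q b ∧
      PowerSeries.coeff (R := (ZMod p)) 0 ainv = 0 ∧ PowerSeries.coeff (R := (ZMod p)) 0 binv = 0 ∧
      pcomp a ainv = PowerSeries.X ∧ pcomp ainv a = PowerSeries.X ∧
      pcomp b binv = PowerSeries.X ∧ pcomp binv b = PowerSeries.X ∧
      InTi q rres (l + 1) ∧
      f = pcomp (pcomp (pcomp (pcomp a b) ainv) binv) rres := by
  classical
  obtain ⟨⟨hf0, hf1, hfT⟩, hflow⟩ := hf
  have hp2 : 2 ≤ p := (Fact.out : p.Prime).two_le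
  have hq2 : 2 ≤ q := by
    rw [hq]
    calc 2 ≤ p := hp2
    _ ≤ p ^ r := Nat.le_self_pow (by omega) p
  have hqdvd : p ∣ q := by rw [hq]; exact dvd_pow_self p (by omega)
  set i := l - q with hidef
  have hil : l = i + q := by omega
  have hi2 : 2 ≤ i := by omega
  have hpi : ¬ p ∣ i := fun hd => hlp (by rw [hil]; exact dvd_add hd hqdvd)
  have hine : ((i : ℕ) : ZMod p) ≠ 0 := by
    rw [Ne, ZMod.natCast_eq_zero_iff]; exact hpi
  set M := 1 + q * l with hMdef
  set c := PowerSeries.coeff (R := (ZMod p)) M f with hcdef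
  set β : ZMod p := - c * ((i : ℕ) : ZMod p)⁻¹ with hβdef
  have hiβ : ((i : ℕ) : ZMod p) * β = - c := by
    have hinv := mul_inv_cancel₀ hine
    calc ((i : ℕ) : ZMod p) * (- c * ((i : ℕ) : ZMod p)⁻¹)
        = - c * (((i : ℕ) : ZMod p) * ((i : ℕ) : ZMod p)⁻¹) := by ring
    _ = - c := by rw [hinv, mul_one]
  -- basic nat inequalities
  have hqi4 : 4 ≤ q * i := by
    have h := Nat.mul_le_mul hq2 hi2; norm_num at h; exact h
  have hqq4 : 4 ≤ q * q := by
    have h := Nat.mul_le_mul hq2 hq2; norm_num at h; exact h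
  have hqlt : q < q * q := by nlinarith
  have hqqq : q * i + q * q < q * (q * i) + q := by nlinarith
  have hMM : M = q * i + q * q + 1 := by rw [hMdef, hil]; ring
  -- the explicit series a and b
  set a : PowerSeries (ZMod p) := X + X ^ (q + 1) with hadef
  set b : PowerSeries (ZMod p) := X + C (R := (ZMod p)) β * X ^ (q * i + 1) with hbdef
  have hca : ∀ n, PowerSeries.coeff (R := (ZMod p)) n a
      = (if n = 1 then 1 else 0) + (if n = q + 1 then 1 else 0) := by
    intro n; rw [hadef, map_add, PowerSeries.coeff_X, PowerSeries.coeff_X_pow]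
  have hcb : ∀ n, PowerSeries.coeff (R := (ZMod p)) n b
      = (if n = 1 then 1 else 0) + β * (if n = q * i + 1 then 1 else 0) := by
    intro n; rw [hbdef, map_add, PowerSeries.coeff_X, coeff_C_mul, PowerSeries.coeff_X_pow]
  have ha0 : PowerSeries.coeff (R := (ZMod p)) 0 a = 0 := by
    rw [hca 0, if_neg (by omega), if_neg (by omega), add_zero]
  have ha1 : PowerSeries.coeff (R := (ZMod p)) 1 a = 1 := by
    rw [hca 1, if_pos rfl, if_neg (by omega), add_zero]
  have hb0 : PowerSeries.coeff (R := (ZMod p)) 0 b = 0 := by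
    rw [hcb 0, if_neg (by omega), if_neg (by omega), mul_zero, add_zero]
  have hb1 : PowerSeries.coeff (R := (ZMod p)) 1 b = 1 := by
    rw [hcb 1, if_pos rfl, if_neg (by omega), mul_zero, add_zero]
  have h1q : 1 % q = 1 := Nat.one_mod_eq_one.mpr (by omega)
  have hqa : ∀ m, m % q ≠ 1 % q → PowerSeries.coeff (R := (ZMod p)) m a = 0 := by
    intro m hm
    rw [hca m, if_neg (fun h => hm (by rw [h])),
      if_neg (fun h => hm (by rw [h]; exact Nat.add_mod_left q 1)), add_zero]
  have hqb : ∀ m, m % q ≠ 1 % q → PowerSeries.coeff (R := (ZMod p)) m b = 0 := by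
    intro m hm
    rw [hcb m, if_neg (fun h => hm (by rw [h])),
      if_neg (fun h => hm (by rw [h]; exact Nat.mul_add_mod q i 1)), mul_zero, add_zero]
  have hInTa : InT q a :=
    ⟨ha0, ha1, fun m hm hdvd => hqa m (fun h => hdvd ((mod_eq_one_iff hq2 (by omega)).mp h))⟩
  have hInTb : InT q b :=
    ⟨hb0, hb1, fun m hm hdvd => hqb m (fun h => hdvd ((mod_eq_one_iff hq2 (by omega)).mp h))⟩
  -- inverses
  obtain ⟨ainv, hainv0, hainv1, haR, haL⟩ := exists_pinv ha0 ha1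
  obtain ⟨binv, hbinv0, hbinv1, hbR, hbL⟩ := exists_pinv hb0 hb1
  set P := pcomp a b with hPdef
  set Q := pcomp b a with hQdef
  set W := pcomp (pcomp P ainv) binv with hWdef
  have hP0 : PowerSeries.coeff (R := (ZMod p)) 0 P = 0 := by rw [hPdef, coeff_zero_pcomp, ha0]
  have hQ0 : PowerSeries.coeff (R := (ZMod p)) 0 Q = 0 := by rw [hQdef, coeff_zero_pcomp, hb0]
  have hQ1 : PowerSeries.coeff (R := (ZMod p)) 1 Q = 1 := by
    rw [hQdef, coeff_one_pcomp, hb1, ha1, one_mul]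
  have hW0 : PowerSeries.coeff (R := (ZMod p)) 0 W = 0 := by
    rw [hWdef, coeff_zero_pcomp, coeff_zero_pcomp, hP0]
  have hW1 : PowerSeries.coeff (R := (ZMod p)) 1 W = 1 := by
    rw [hWdef, coeff_one_pcomp, coeff_one_pcomp, hPdef, coeff_one_pcomp, ha1, hb1,
      hainv1, hbinv1]
    ring
  -- the commutator relation W ∘ Q = P
  have hQ0' : PowerSeries.coeff (R := (ZMod p)) 0 (pcomp b a) = 0 := by rw [coeff_zero_pcomp, hb0]
  have hWQ : pcomp W Q = P := by
    rw [hWdef, hQdef, pcomp_assoc hbinv0 hQ0', ← pcomp_assoc hb0 ha0, hbL,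
      pcomp_X ha0, pcomp_assoc hainv0 ha0, haL, pcomp_X_right]
  set E := W - X with hEdef
  have hEQ : pcomp E Q = P - Q := by
    rw [hEdef, pcomp_sub, hWQ, pcomp_X hQ0]
  -- characteristic p
  haveI : CharP (PowerSeries (ZMod p)) p := ⟨fun n => by
    rw [← map_natCast (C (R := (ZMod p))) n]
    constructor
    · intro hcn
      have h := congrArg (constantCoeff (R := (ZMod p))) hcn
      rw [constantCoeff_C, map_zero] at h
      exact (ZMod.natCast_eq_zero_iff n p).mp h
    · intro hdvd
      rw [(ZMod.natCast_eq_zero_iff n p).mpr hdvd, map_zero]⟩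
  have hfrob : ∀ x y : PowerSeries (ZMod p), (x + y) ^ q = x ^ q + y ^ q := by
    intro x y; rw [hq]; exact add_pow_char_pow x y p r
  -- explicit expansion of P
  have hbq : b ^ q = X ^ q + C (R := (ZMod p)) (β ^ q) * X ^ (q * (q * i) + q) := by
    rw [hbdef, hfrob, mul_pow, ← map_pow, ← pow_mul]
    have h : (q * i + 1) * q = q * (q * i) + q := by ring
    rw [h]
  have hP : P = X + C (R := (ZMod p)) β * X ^ (q * i + 1) + X ^ (q + 1)
      + C (R := (ZMod p)) β * X ^ (q * i + q + 1)
      + C (R := (ZMod p)) (β ^ q) * X ^ (q * (q * i) + q + 1)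
      + C (R := (ZMod p)) (β ^ q) * (C (R := (ZMod p)) β * X ^ (q * (q * i) + q + q * i + 1)) := by
    rw [hPdef, hadef, pcomp_add, pcomp_X hb0, pcomp_X_pow hb0 (by omega)]
    have h : b ^ (q + 1) = b ^ q * b := by rw [pow_succ]
    rw [h, hbq, hbdef]
    ring
  -- explicit expansion of Q
  have haq : a ^ q = X ^ q * (1 + X ^ (q * q)) := by
    rw [hadef, hfrob, ← pow_mul]
    have h : (q + 1) * q = q + q * q := by ring
    rw [h, pow_add, mul_add, mul_one]
  obtain ⟨S, hS⟩ := one_add_pow (X ^ (q * q) : PowerSeries (ZMod p)) i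
  have hanat : ((i : ℕ) : PowerSeries (ZMod p)) = C (R := (ZMod p)) ((i : ℕ) : ZMod p) :=
    (map_natCast (C (R := (ZMod p))) i).symm
  have hQ : Q = X + X ^ (q + 1) + C (R := (ZMod p)) β * X ^ (q * i + 1)
      + C (R := (ZMod p)) β * X ^ (q * i + q + 1)
      + C (R := (ZMod p)) ((i : ℕ) : ZMod p) * (C (R := (ZMod p)) β * X ^ (q * i + q * q + 1))
      + C (R := (ZMod p)) ((i : ℕ) : ZMod p) * (C (R := (ZMod p)) β * X ^ (q * i + q + q * q + 1))
      + X ^ (q * i + 2 * (q * q) + 1) * (C (R := (ZMod p)) β * ((1 + X ^ q) * S)) := by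
    rw [hQdef, hbdef, pcomp_add, pcomp_X ha0, pcomp_C_mul, pcomp_X_pow ha0 (by omega)]
    have e1 : a ^ (q * i + 1) = (a ^ q) ^ i * a := by rw [← pow_mul, ← pow_succ]
    rw [e1, haq, mul_pow, ← pow_mul, hS, hadef, hanat]
    ring
  -- the key coefficient computation for P - Q
  have c5' : M < q * (q * i) + q + 1 := by rw [hMM]; linarith
  have c6' : M < q * (q * i) + q + q * i + 1 := by rw [hMM]; linarith
  have c8' : M < q * i + q + q * q + 1 := by rw [hMM]; linarith
  have c9' : M < q * i + 2 * (q * q) + 1 := by rw [hMM]; linarith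
  have hkey : ∀ m, m ≤ M → PowerSeries.coeff (R := (ZMod p)) m P - PowerSeries.coeff (R := (ZMod p)) m Q
      = if m = M then c else 0 := by
    intro m hm
    have hlast : PowerSeries.coeff (R := (ZMod p)) m
        (X ^ (q * i + 2 * (q * q) + 1) * (C (R := (ZMod p)) β * ((1 + X ^ q) * S))) = 0 :=
      X_pow_dvd_iff.mp ⟨_, rfl⟩ m (by linarith)
    rw [hP, hQ]
    simp only [map_add, coeff_C_mul, PowerSeries.coeff_X_pow, PowerSeries.coeff_X, hlast]
    by_cases hmM : m = M
    · subst hmM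
      rw [if_pos rfl,
        if_neg (show ¬ M = 1 by rw [hMM]; intro h; linarith),
        if_neg (show ¬ M = q * i + 1 by rw [hMM]; intro h; linarith),
        if_neg (show ¬ M = q + 1 by rw [hMM]; intro h; linarith),
        if_neg (show ¬ M = q * i + q + 1 by rw [hMM]; intro h; linarith),
        if_neg (show ¬ M = q * (q * i) + q + 1 by intro h; rw [h] at c5'; linarith),
        if_neg (show ¬ M = q * (q * i) + q + q * i + 1 by intro h; rw [h] at c6'; linarith),
        if_pos hMM,
        if_neg (show ¬ M = q * i + q + q * q + 1 by intro h; rw [h] at c8'; linarith)]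
      linear_combination -hiβ
    · rw [if_neg hmM,
        if_neg (show ¬ m = q * (q * i) + q + 1 by intro h; rw [h] at hm; linarith),
        if_neg (show ¬ m = q * (q * i) + q + q * i + 1 by intro h; rw [h] at hm; linarith),
        if_neg (show ¬ m = q * i + q * q + 1 by rw [← hMM]; exact hmM),
        if_neg (show ¬ m = q * i + q + q * q + 1 by intro h; rw [h] at hm; linarith)]
      ring
  -- coefficients of E and W
  have hE : ∀ m, m ≤ M → PowerSeries.coeff (R := (ZMod p)) m E = if m = M then c else 0 := by
    intro m
    induction m using Nat.strong_induction_on with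
    | _ m ih =>
      intro hm
      have h0 : ∀ j, j < m → PowerSeries.coeff (R := (ZMod p)) j E = 0 := by
        intro j hj
        rw [ih j hj (le_of_lt (lt_of_lt_of_le hj hm))]
        exact if_neg (lt_of_lt_of_le hj hm).ne
      rw [← coeff_pcomp_self hQ0 hQ1 h0, hEQ, map_sub]
      exact hkey m hm
  have hWc : ∀ m, 2 ≤ m → m ≤ M → PowerSeries.coeff (R := (ZMod p)) m W
      = if m = M then c else 0 := by
    intro m h2 hm
    have h : PowerSeries.coeff (R := (ZMod p)) m W
        = PowerSeries.coeff (R := (ZMod p)) m E + PowerSeries.coeff (R := (ZMod p)) m X := by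
      rw [hEdef, map_sub]; ring
    rw [h, hE m hm, PowerSeries.coeff_X, if_neg (show ¬ m = 1 by omega), add_zero]
  -- support of W
  have hqW : ∀ m, m % q ≠ 1 % q → PowerSeries.coeff (R := (ZMod p)) m W = 0 := by
    have hP' := suppOne_pcomp hqa hqb
    have hainv' := suppOne_inv hq2 hqa ha0 ha1 hainv0 haR
    have h2 := suppOne_pcomp hP' hainv'
    have hbinv' := suppOne_inv hq2 hqb hb0 hb1 hbinv0 hbR
    exact suppOne_pcomp h2 hbinv'
  obtain ⟨Winv, hWinv0, hWinv1, hWR, hWL⟩ := exists_pinv hW0 hW1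
  have hqWinv := suppOne_inv hq2 hqW hW0 hW1 hWinv0 hWR
  set rres := pcomp Winv f with hrdef
  have hfr : f = pcomp W rres := by
    rw [hrdef, ← pcomp_assoc hWinv0 hf0, hWR, pcomp_X hf0]
  have hqf : ∀ m, m % q ≠ 1 % q → PowerSeries.coeff (R := (ZMod p)) m f = 0 := by
    intro m hm
    match m with
    | 0 => exact hf0
    | 1 => exact absurd rfl hm
    | (m+2) =>
      exact hfT (m+2) (by omega)
        (fun hd => hm ((mod_eq_one_iff hq2 (by omega)).mpr hd))
  have hqr : ∀ m, m % q ≠ 1 % q → PowerSeries.coeff (R := (ZMod p)) m rres = 0 :=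
    suppOne_pcomp hqWinv hqf
  have hr0 : PowerSeries.coeff (R := (ZMod p)) 0 rres = 0 := by
    rw [hrdef, coeff_zero_pcomp, hWinv0]
  have hr1 : PowerSeries.coeff (R := (ZMod p)) 1 rres = 1 := by
    rw [hrdef, coeff_one_pcomp, hWinv1, hf1, one_mul]
  have hInTr : InT q rres :=
    ⟨hr0, hr1, fun m hm hdvd => hqr m (fun h => hdvd ((mod_eq_one_iff hq2 (by omega)).mp h))⟩
  have hfw : ∀ j, 2 ≤ j → j ≤ M → PowerSeries.coeff (R := (ZMod p)) j f
      = PowerSeries.coeff (R := (ZMod p)) j W := by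
    intro j hj2 hjM
    rw [hWc j hj2 hjM]
    by_cases hjM' : j = M
    · rw [if_pos hjM', hjM']
    · rw [if_neg hjM']
      exact hflow j hj2 (by rw [hMdef] at hjM hjM'; omega)
  have hrlow : ∀ m, 2 ≤ m → m < 1 + q * (l + 1) → PowerSeries.coeff (R := (ZMod p)) m rres = 0 := by
    intro m h2 hlt
    by_cases hmod : m % q = 1 % q
    · have hdvd : q ∣ (m - 1) := (mod_eq_one_iff hq2 (by omega)).mp hmod
      obtain ⟨t, ht⟩ := hdvd
      rw [Nat.sub_eq_iff_eq_add (by omega)] at ht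
      have htl : t ≤ l := by
        by_contra hc
        push_neg at hc
        have h3 : q * (l + 1) ≤ q * t := Nat.mul_le_mul_left q hc
        have h4 : m = q * t + 1 := ht
        linarith
      have h5 : q * t ≤ q * l := Nat.mul_le_mul_left q htl
      have hmle : m ≤ M := by rw [hMdef]; linarith [ht, h5]
      have h6 := coeff_cancel hW0 hW1 hr0 hfr hf1 M hfw m hmle
      rw [h6, PowerSeries.coeff_X, if_neg (by omega)]
    · exact hqr m hmod
  exact ⟨a, b, ainv, binv, rres, hInTa, hInTb, hainv0, hbinv0, haR, haL, hbR, hbL,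
    ⟨hInTr, hrlow⟩, hfr⟩
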